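/- arXiv:2212.09429 — 2 statements merged into one kernel-verified Lean document; each statement's English description precedes it below -/
import Mathlib

section
/- Let φ̄ be the trivial representation of dimension |𝒳|·|𝒜| defined by φ̄(x,a) := the standard basis vector of ℝ^{𝒳×𝒜} indexed by (x,a), and let f* be any reward function with a unique optimal arm π* in every context. Then for ANY set Φ of representations (not necessarily realizable for f*), C(f*, ℱ_{Φ ∪ {φ̄}}) = Σ_{x∈𝒳} Σ_{a ≠ π*(x)} 2/Δ_{f*}(x,a). -/
open scoped ENNReal

/-- The instance-dependent complexity `C(f, ℱ)`: infimum over nonnegative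
allocations `η` of the regret `∑ η(x,a) Δ_f(x,a)` subject to the information
constraint `∑ η(x,a) (1/2)(f(x,a) - f'(x,a))² ≥ 1` for every alternative
`f' ∈ Λ(f, ℱ)`. The value is `⊤` when no feasible allocation exists.
Here `π` is the (unique) optimal policy of `f`. -/
noncomputable def Complexity {X A : Type*} [Fintype X] [Fintype A]
    (f : X → A → ℝ) (π : X → A) (F : Set (X → A → ℝ)) : ℝ≥0∞ :=
  sInf { c : ℝ≥0∞ | ∃ η : X → A → ℝ,
    (∀ x a, 0 ≤ η x a) ∧
    (∀ f' ∈ F, (∃ x, ∃ a, a ≠ π x ∧ f' x (π x) < f' x a) →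
      1 ≤ ∑ x, ∑ a, η x a * (1 / 2 * (f x a - f' x a) ^ 2)) ∧
    c = ENNReal.ofReal (∑ x, ∑ a, η x a * (f x (π x) - f x a)) }

/-- `π x` is the unique optimal arm of `f` in every context `x`. -/
def UniqueOpt {X A : Type*} (f : X → A → ℝ) (π : X → A) : Prop :=
  ∀ x a, a ≠ π x → f x a < f x (π x)

/-- The class of reward functions that are linear in the representation `φ`. -/
def linClass {X A κ : Type*} [Fintype κ] (φ : X → A → κ → ℝ) :
    Set (X → A → ℝ) :=
  { f | ∃ θ : κ → ℝ, ∀ x a, f x a = ∑ j, φ x a j * θ j }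

/-!
The tabular representation realises every reward function, so adding it to any set of
representations yields the unstructured class, where the complexity decouples over
context–arm pairs. For a suboptimal pair `(x, a)` with gap `Δ`, the alternative that raises
`f(x,a)` just above `f(x, π x)` and changes nothing else forces `η(x,a) Δ² / 2 ≥ 1`, so every
feasible allocation pays at least `∑ 2/Δ`. Conversely, weight `(1+δ) 2/Δ²` on each suboptimal
arm and a weight `∝ 1/δ` on the optimal arm (free, as its gap is zero) is feasible and pays
`(1+δ) ∑ 2/Δ`.
-/

open Finset

section Allocation

variable {X A : Type*}

noncomputable def gap (f : X → A → ℝ) (π : X → A) (x : X) (a : A) : ℝ := f x (π x) - f x a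

lemma gap_pos {f : X → A → ℝ} {π : X → A} (hπ : UniqueOpt f π) {x : X} {a : A}
    (ha : a ≠ π x) : 0 < gap f π x a :=
  sub_pos.mpr (hπ x a ha)

variable [Fintype X] [Fintype A]

noncomputable def regret (f : X → A → ℝ) (π : X → A) (η : X → A → ℝ) : ℝ :=
  ∑ x, ∑ a, η x a * gap f π x a

noncomputable def informationGain (f f' : X → A → ℝ) (η : X → A → ℝ) : ℝ :=
  ∑ x, ∑ a, η x a * (1 / 2 * (f x a - f' x a) ^ 2)

def IsAlternative (π : X → A) (f' : X → A → ℝ) : Prop :=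
  ∃ x a, a ≠ π x ∧ f' x (π x) < f' x a

def IsFeasibleAllocation (f : X → A → ℝ) (π : X → A) (F : Set (X → A → ℝ))
    (η : X → A → ℝ) : Prop :=
  (∀ x a, 0 ≤ η x a) ∧ ∀ f' ∈ F, IsAlternative π f' → 1 ≤ informationGain f f' η

lemma complexity_le_regret {f : X → A → ℝ} {π : X → A} {F : Set (X → A → ℝ)}
    {η : X → A → ℝ} (hη : IsFeasibleAllocation f π F η) :
    Complexity f π F ≤ ENNReal.ofReal (regret f π η) :=
  sInf_le ⟨η, hη.1, hη.2, rfl⟩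

lemma le_complexity {f : X → A → ℝ} {π : X → A} {F : Set (X → A → ℝ)} {c : ℝ≥0∞}
    (h : ∀ η, IsFeasibleAllocation f π F η → c ≤ ENNReal.ofReal (regret f π η)) :
    c ≤ Complexity f π F :=
  le_sInf <| by
    rintro _ ⟨η, hnonneg, hinfo, rfl⟩
    exact h η ⟨hnonneg, hinfo⟩

lemma informationGain_update [DecidableEq X] [DecidableEq A] (f : X → A → ℝ)
    (η : X → A → ℝ) (x : X) (a : A) (v : ℝ) :
    informationGain f (Function.update f x (Function.update (f x) a v)) η =
      η x a * (1 / 2 * (f x a - v) ^ 2) := by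
  unfold informationGain
  rw [sum_eq_single x (fun x' _ hx' => by simp [hx']) (by simp),
    sum_eq_single a (fun b _ hb => by simp [hb]) (by simp)]
  simp

lemma add_le_informationGain {η : X → A → ℝ} (hη : ∀ x a, 0 ≤ η x a) (f f' : X → A → ℝ)
    (x : X) {a b : A} (hab : a ≠ b) :
    η x a * (1 / 2 * (f x a - f' x a) ^ 2) + η x b * (1 / 2 * (f x b - f' x b) ^ 2) ≤
      informationGain f f' η := by
  have hterm : ∀ x' c, 0 ≤ η x' c * (1 / 2 * (f x' c - f' x' c) ^ 2) :=
    fun x' c => mul_nonneg (hη x' c) (by positivity)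
  classical
  calc _ = ∑ c ∈ {a, b}, η x c * (1 / 2 * (f x c - f' x c) ^ 2) := (sum_pair hab).symm
    _ ≤ ∑ c, η x c * (1 / 2 * (f x c - f' x c) ^ 2) :=
      sum_le_sum_of_subset_of_nonneg (subset_univ _) fun c _ _ => hterm x c
    _ ≤ informationGain f f' η :=
      single_le_sum (f := fun x' => ∑ c, η x' c * (1 / 2 * (f x' c - f' x' c) ^ 2))
        (fun x' _ => sum_nonneg fun c _ => hterm x' c) (mem_univ x)

end Allocation

lemma le_of_forall_pos_le_of_continuousWithinAt {α : Type*} [TopologicalSpace α]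
    [Preorder α] [ClosedIciTopology α] {g : ℝ → α} {c : α}
    (hg : ContinuousWithinAt g (Set.Ioi 0) 0) (h : ∀ t > 0, c ≤ g t) : c ≤ g 0 :=
  ge_of_tendsto hg (eventually_nhdsWithin_of_forall h)

-- Cauchy–Schwarz with weights `(δ, 1)`: `δ (v - u)² ≤ (1 + δ)(δ u² + v²)`, and `D < v - u`.
lemma one_le_weighted_sq_add_of_lt_sub {δ D u v : ℝ} (hδ : 0 < δ) (hD : 0 < D)
    (h : D < v - u) :
    1 ≤ (1 + δ) * (2 / D ^ 2) * (1 / 2 * u ^ 2) + (1 + δ) * (2 / D ^ 2) / δ * (1 / 2 * v ^ 2) := by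
  have hsq : δ * D ^ 2 ≤ δ * (v - u) ^ 2 := by gcongr
  have hsum : (1 + δ) * (2 / D ^ 2) * (1 / 2 * u ^ 2) + (1 + δ) * (2 / D ^ 2) / δ * (1 / 2 * v ^ 2)
      = (1 + δ) * (δ * u ^ 2 + v ^ 2) / (δ * D ^ 2) := by
    field_simp
  rw [hsum, le_div_iff₀ (by positivity)]
  nlinarith [sq_nonneg (v + δ * u)]

section Unstructured

variable {X A : Type*} [Fintype A] [DecidableEq A] {f : X → A → ℝ} {π : X → A}

noncomputable def nearOptimalAllocation (f : X → A → ℝ) (π : X → A) (δ : ℝ) :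
    X → A → ℝ := fun x a =>
  if a = π x then
    (∑ b ∈ univ.filter (fun b => b ≠ π x), (1 + δ) * (2 / gap f π x b ^ 2)) / δ
  else (1 + δ) * (2 / gap f π x a ^ 2)

lemma nearOptimalAllocation_nonneg {δ : ℝ} (hδ : 0 ≤ δ) (x : X) (a : A) :
    0 ≤ nearOptimalAllocation f π δ x a := by
  unfold nearOptimalAllocation
  split_ifs
  · exact div_nonneg (sum_nonneg fun b _ => by positivity) hδ
  · positivity

variable [Fintype X]

lemma isFeasibleAllocation_nearOptimalAllocation (hπ : UniqueOpt f π) {δ : ℝ}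
    (hδ : 0 < δ) (F : Set (X → A → ℝ)) :
    IsFeasibleAllocation f π F (nearOptimalAllocation f π δ) := by
  set η := nearOptimalAllocation f π δ
  refine ⟨nearOptimalAllocation_nonneg hδ.le, ?_⟩
  rintro f' - ⟨x, a, ha, hlt⟩
  have hηa : η x a = (1 + δ) * (2 / gap f π x a ^ 2) := if_neg ha
  have hηπ : (1 + δ) * (2 / gap f π x a ^ 2) / δ ≤ η x (π x) := by
    simp only [η, nearOptimalAllocation]
    refine div_le_div_of_nonneg_right ?_ hδ.le
    exact single_le_sum (f := fun b => (1 + δ) * (2 / gap f π x b ^ 2))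
      (fun b _ => by positivity) (mem_filter.mpr ⟨mem_univ a, ha⟩)
  have hcs := one_le_weighted_sq_add_of_lt_sub hδ (gap_pos hπ ha)
    (u := f x a - f' x a) (v := f x (π x) - f' x (π x)) (by simp only [gap]; linarith)
  have hpair := add_le_informationGain (η := η) (nearOptimalAllocation_nonneg hδ.le) f f' x ha
  rw [hηa] at hpair
  nlinarith [mul_le_mul_of_nonneg_right hηπ
    (by positivity : (0 : ℝ) ≤ 1 / 2 * (f x (π x) - f' x (π x)) ^ 2)]

lemma regret_nearOptimalAllocation (hπ : UniqueOpt f π) (δ : ℝ) :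
    regret f π (nearOptimalAllocation f π δ) =
      (1 + δ) * ∑ x, ∑ a ∈ univ.filter (fun a => a ≠ π x), 2 / gap f π x a := by
  rw [mul_sum]
  refine sum_congr rfl fun x _ => ?_
  rw [mul_sum, ← sum_filter_add_sum_filter_not univ (fun a => a ≠ π x)]
  have hopt : ∑ a ∈ univ.filter (fun a => ¬a ≠ π x),
      nearOptimalAllocation f π δ x a * gap f π x a = 0 :=
    sum_eq_zero fun a ha => by
      obtain rfl : a = π x := by simpa using ha
      simp [gap]
  rw [hopt, add_zero]
  refine sum_congr rfl fun a ha => ?_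
  have ha := (mem_filter.mp ha).2
  have hD := (gap_pos hπ ha).ne'
  simp only [nearOptimalAllocation, if_neg ha]
  field_simp

lemma two_le_mul_gap_sq [DecidableEq X] {η : X → A → ℝ}
    (hη : IsFeasibleAllocation f π Set.univ η) {x : X} {a : A} (ha : a ≠ π x) :
    2 ≤ η x a * gap f π x a ^ 2 := by
  have hraised : ∀ t > 0, 1 ≤ η x a * (1 / 2 * (gap f π x a + t) ^ 2) := by
    intro t ht
    have halt : IsAlternative π (Function.update f x (Function.update (f x) a (f x (π x) + t))) :=
      ⟨x, a, ha, by simp [Function.update_of_ne (Ne.symm ha), ht]⟩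
    have := hη.2 _ (Set.mem_univ _) halt
    rw [informationGain_update] at this
    convert this using 3
    unfold gap
    ring
  have hcont : ContinuousWithinAt (fun t => η x a * (1 / 2 * (gap f π x a + t) ^ 2))
      (Set.Ioi 0) 0 := by
    fun_prop
  have := le_of_forall_pos_le_of_continuousWithinAt hcont hraised
  simp only [add_zero] at this
  linarith

lemma sum_two_div_gap_le_regret [DecidableEq X] (hπ : UniqueOpt f π) {η : X → A → ℝ}
    (hη : IsFeasibleAllocation f π Set.univ η) :
    ∑ x, ∑ a ∈ univ.filter (fun a => a ≠ π x), 2 / gap f π x a ≤ regret f π η := by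
  refine sum_le_sum fun x _ => ?_
  calc ∑ a ∈ univ.filter (fun a => a ≠ π x), 2 / gap f π x a
      ≤ ∑ a ∈ univ.filter (fun a => a ≠ π x), η x a * gap f π x a := by
        refine sum_le_sum fun a ha => ?_
        have ha := (mem_filter.mp ha).2
        rw [div_le_iff₀ (gap_pos hπ ha)]
        linarith [two_le_mul_gap_sq hη ha]
    _ ≤ ∑ a, η x a * gap f π x a := by
        refine sum_le_sum_of_subset_of_nonneg (filter_subset _ _) fun a _ ha => ?_
        obtain rfl : a = π x := by simpa using ha
        simp [gap]

theorem complexity_univ [DecidableEq X] (hπ : UniqueOpt f π) :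
    Complexity f π Set.univ =
      ENNReal.ofReal (∑ x, ∑ a ∈ univ.filter (fun a => a ≠ π x), 2 / gap f π x a) := by
  set T := ∑ x, ∑ a ∈ univ.filter (fun a => a ≠ π x), 2 / gap f π x a
  refine le_antisymm ?_ (le_complexity fun η hη =>
    ENNReal.ofReal_le_ofReal (sum_two_div_gap_le_regret hπ hη))
  have hcont : ContinuousWithinAt (fun δ : ℝ => ENNReal.ofReal ((1 + δ) * T)) (Set.Ioi 0) 0 :=
    (ENNReal.continuous_ofReal.comp (by fun_prop)).continuousWithinAt
  have := le_of_forall_pos_le_of_continuousWithinAt hcont fun δ hδ =>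
    (complexity_le_regret (isFeasibleAllocation_nearOptimalAllocation hπ hδ Set.univ)).trans_eq
      (by rw [regret_nearOptimalAllocation hπ])
  simpa using this

end Unstructured

lemma linClass_eq_univ_of_tabular {X A : Type*} [Fintype X] [Fintype A] [DecidableEq X]
    [DecidableEq A] {φbar : X → A → X × A → ℝ}
    (hφbar : ∀ x a p, φbar x a p = if p = (x, a) then 1 else 0) :
    linClass φbar = Set.univ :=
  Set.eq_univ_of_forall fun g =>
    ⟨fun p => g p.1 p.2, fun x a => by simp [hφbar, ite_mul, sum_ite_eq']⟩

theorem complexity_with_trivial_representation_general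
    {X A : Type*} [Fintype X] [Fintype A]
    [DecidableEq X] [DecidableEq A]
    {ι : Type*} (d : ι → ℕ) (φ : (i : ι) → X → A → Fin (d i) → ℝ)
    (φbar : X → A → X × A → ℝ)
    (hφbar : ∀ x a p, φbar x a p = if p = (x, a) then 1 else 0)
    (f : X → A → ℝ) (π : X → A) (hπ : UniqueOpt f π) :
    Complexity f π ((⋃ i, linClass (φ i)) ∪ linClass φbar) =
      ENNReal.ofReal (∑ x, ∑ a ∈ Finset.univ.filter (fun a => a ≠ π x),
        2 / (f x (π x) - f x a)) := by
  rw [linClass_eq_univ_of_tabular hφbar, Set.union_univ]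
  exact complexity_univ hπ

/-- Adding the trivial (tabular) representation `φ̄`, given by the standard
basis of `ℝ^{𝒳×𝒜}`, to any set of representations makes representation
learning exactly as hard as learning without any prior knowledge: the
complexity equals the unstructured sum of inverse gaps. -/
theorem complexity_with_trivial_representation
    {X A : Type*} [Fintype X] [Fintype A] [Nonempty X] [Nonempty A]
    [DecidableEq X] [DecidableEq A]
    {ι : Type*} (d : ι → ℕ) (φ : (i : ι) → X → A → Fin (d i) → ℝ)
    (φbar : X → A → X × A → ℝ)
    (hφbar : ∀ x a p, φbar x a p = if p = (x, a) then 1 else 0)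
    (f : X → A → ℝ) (π : X → A) (hπ : UniqueOpt f π) :
    Complexity f π ((⋃ i, linClass (φ i)) ∪ linClass φbar) =
      ENNReal.ofReal (∑ x, ∑ a ∈ Finset.univ.filter (fun a => a ≠ π x),
        2 / (f x (π x) - f x a)) :=
  complexity_with_trivial_representation_general d φ φbar hφbar f π hπ
end

section
/- Let |𝒳| = X, |𝒜| = A ≥ 2, let 2 ≤ d_min < d_max ≤ X(A−1), let 2 ≤ N ≤ d_max − d_min + 1, and let Δ_min > 0. Then there exist a reward function f* : 𝒳 × 𝒜 → ℝ with a unique optimal arm in every context and all positive gaps equal to Δ_min, and a set Φ = {φ_1, …, φ_N} of nested representations (the first d_i coordinates of φ_{i+1} equal φ_i) with dim(φ_1) = d_min and dim(φ_N) = d_max, such that f* ∈ ℱ_{φ_i} for all i, C(f*, ℱ_{φ_1}) ≤ 2·d_min/Δ_min, and C(f*, ℱ_{φ_N}) ≥ d_max/Δ_min. -/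
/-!
Take `f = Δ` on a fixed arm `a₀` and `0` elsewhere, label the suboptimal pairs `1, 2, …` and the
optimal ones `0`, and let the `m`-dimensional representation be the one-hot encoding of the labels
below `m`. These representations are nested and all contain `f`; an `m`-dimensional alternative
takes a common value `t` on the optimal pairs and exceeds it at some suboptimal pair, where it is
the free coordinate of that label if the label is below `m` and `0` otherwise.

Lower bound: raising `f` to `s Δ`, `s > 1`, on a single label `n < m` is an alternative that only
the pairs labelled `n` detect, so they carry weight at least `2 / Δ²`; the `m - 1` labels then
cost at least `2 (m - 1) / Δ ≥ m / Δ`.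

Upper bound: the optimal pairs cost nothing, so they can carry the large weight `2 m / Δ²`; with
weight `2 m / ((m - 1) Δ²)` on the labelled pairs the reciprocal weights add up to `1 / 2`, which
by Cauchy–Schwarz detects every alternative, at cost `2 m / Δ`.
-/

open scoped ENNReal

open Finset Filter Topology

section Complexity

variable {X A : Type*} [Fintype X] [Fintype A]

def IsFeasibleAlloc (f : X → A → ℝ) (π : X → A) (F : Set (X → A → ℝ))
    (η : X → A → ℝ) : Prop :=
  (∀ x a, 0 ≤ η x a) ∧
    ∀ f' ∈ F, (∃ x, ∃ a, a ≠ π x ∧ f' x (π x) < f' x a) →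
      1 ≤ ∑ x, ∑ a, η x a * (1 / 2 * (f x a - f' x a) ^ 2)

def allocRegret (f : X → A → ℝ) (π : X → A) (η : X → A → ℝ) : ℝ :=
  ∑ x, ∑ a, η x a * (f x (π x) - f x a)

variable {f : X → A → ℝ} {π : X → A} {F : Set (X → A → ℝ)}

theorem complexity_le_allocRegret {η : X → A → ℝ} (hη : IsFeasibleAlloc f π F η) :
    Complexity f π F ≤ ENNReal.ofReal (allocRegret f π η) :=
  sInf_le ⟨η, hη.1, hη.2, rfl⟩

theorem ofReal_le_complexity {c : ℝ}
    (h : ∀ η, IsFeasibleAlloc f π F η → c ≤ allocRegret f π η) :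
    ENNReal.ofReal c ≤ Complexity f π F :=
  le_sInf fun _ ⟨η, hnn, hcons, hc⟩ => hc ▸ ENNReal.ofReal_le_ofReal (h η ⟨hnn, hcons⟩)

end Complexity

section OneHot

variable {X A : Type*}

def oneHot (ℓ : X → A → ℕ) (m : ℕ) : X → A → Fin m → ℝ :=
  fun x a j => if ℓ x a = j then 1 else 0

theorem sum_oneHot_mul (ℓ : X → A → ℕ) {m : ℕ} (θ : Fin m → ℝ) (x : X) (a : A) :
    ∑ j, oneHot ℓ m x a j * θ j = if h : ℓ x a < m then θ ⟨ℓ x a, h⟩ else 0 := by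
  split_ifs with h
  · rw [sum_eq_single ⟨ℓ x a, h⟩] <;> intros <;> simp_all [oneHot, Fin.ext_iff, eq_comm]
  · refine sum_eq_zero fun j _ => ?_
    have : ℓ x a ≠ j := by omega
    simp [oneHot, this]

theorem mem_linClass_oneHot_iff {ℓ : X → A → ℕ} {m : ℕ} {f' : X → A → ℝ} :
    f' ∈ linClass (oneHot ℓ m) ↔
      ∃ g : ℕ → ℝ, (∀ n, m ≤ n → g n = 0) ∧ ∀ x a, f' x a = g (ℓ x a) := by
  simp only [linClass, Set.mem_ofPred_eq, sum_oneHot_mul]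
  constructor
  · rintro ⟨θ, hθ⟩
    exact ⟨fun n => if h : n < m then θ ⟨n, h⟩ else 0, fun n hn => dif_neg (by omega), hθ⟩
  · rintro ⟨g, hg, hf'⟩
    refine ⟨fun j => g j, fun x a => ?_⟩
    split_ifs with h
    · exact hf' x a
    · rw [hf' x a, hg _ (not_lt.1 h)]

end OneHot

section GapReward

variable {X A : Type*}

open Classical in
noncomputable def gapReward (π : X → A) (Δ : ℝ) : X → A → ℝ :=
  fun x a => if a = π x then Δ else 0

variable {π : X → A} {Δ : ℝ}

theorem gapReward_sub_of_ne {x : X} {a : A} (ha : a ≠ π x) :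
    gapReward π Δ x (π x) - gapReward π Δ x a = Δ := by
  simp [gapReward, ha]

theorem uniqueOpt_gapReward (hΔ : 0 < Δ) : UniqueOpt (gapReward π Δ) π := fun x a ha => by
  simpa [gapReward, ha] using hΔ

theorem gapReward_mem_linClass_oneHot {ℓ : X → A → ℕ} {m : ℕ}
    (hℓ : ∀ x a, ℓ x a = 0 ↔ a = π x) (hm : 0 < m) :
    gapReward π Δ ∈ linClass (oneHot ℓ m) :=
  mem_linClass_oneHot_iff.2
    ⟨fun n => if n = 0 then Δ else 0, fun n hn => if_neg (by omega),
      fun x a => by by_cases ha : a = π x <;> simp [gapReward, hℓ, ha]⟩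

end GapReward

theorem sq_le_of_inv_add_inv_le {c w Δ t u : ℝ} (hc : 0 < c) (hw : 0 < w)
    (hcw : c⁻¹ + w⁻¹ ≤ 2⁻¹) (hΔ : 0 ≤ Δ) (htu : t < u) :
    Δ ^ 2 ≤ c * (Δ - t) ^ 2 / 2 + w * u ^ 2 / 2 := by
  rcases le_or_gt t 0 with ht | ht
  · have hc2 : 2 ≤ c := (inv_le_inv₀ hc two_pos).1 (by linarith [inv_pos.2 hw])
    nlinarith [sq_nonneg u, sq_nonneg t]
  · have hcs : Δ ^ 2 ≤ (c⁻¹ + w⁻¹) * (c * (Δ - t) ^ 2 + w * t ^ 2) := by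
      have key : (c⁻¹ + w⁻¹) * (c * (Δ - t) ^ 2 + w * t ^ 2) - Δ ^ 2
          = (c * (Δ - t) - w * t) ^ 2 / (c * w) := by
        field_simp; ring
      have : 0 ≤ (c * (Δ - t) - w * t) ^ 2 / (c * w) := by positivity
      linarith
    have hsq : t ^ 2 ≤ u ^ 2 := by nlinarith
    have hnn : 0 ≤ c * (Δ - t) ^ 2 + w * t ^ 2 := by positivity
    nlinarith [mul_le_mul_of_nonneg_right hcw hnn, mul_le_mul_of_nonneg_left hsq hw.le]

section Bounds

variable {X A : Type*} [Fintype X] [Fintype A]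

theorem add_le_sum_sum {g : X → A → ℝ} (hg : ∀ x a, 0 ≤ g x a) (x : X) {a b : A}
    (hab : a ≠ b) : g x a + g x b ≤ ∑ y, ∑ c, g y c :=
  (add_le_sum (fun c _ => hg x c) (mem_univ a) (mem_univ b) hab).trans
    (single_le_sum (f := fun y => ∑ c, g y c) (fun y _ => sum_nonneg fun c _ => hg y c)
      (mem_univ x))

open Classical in
noncomputable def labelAlloc (π : X → A) (ℓ : X → A → ℕ) (m : ℕ) (c w : ℝ) : X → A → ℝ :=
  fun x a => if a = π x then c else if ℓ x a < m then w else 0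

variable {π : X → A} {ℓ : X → A → ℕ} {m : ℕ} {Δ : ℝ}

theorem isFeasibleAlloc_labelAlloc {c w : ℝ} (hc : 0 < c) (hw : 0 < w)
    (hcw : c⁻¹ + w⁻¹ ≤ 2⁻¹) (hΔ : 0 < Δ) :
    IsFeasibleAlloc (gapReward π Δ) π (linClass (oneHot ℓ m))
      (labelAlloc π ℓ m (c / Δ ^ 2) (w / Δ ^ 2)) := by
  set η := labelAlloc π ℓ m (c / Δ ^ 2) (w / Δ ^ 2)
  have hη_nonneg : ∀ x a, 0 ≤ η x a := fun x a => by
    simp only [η, labelAlloc]; split_ifs <;> positivity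
  refine ⟨hη_nonneg, fun f' hf' ⟨x, a, ha, hlt⟩ => ?_⟩
  obtain ⟨g, hg, hf'g⟩ := mem_linClass_oneHot_iff.1 hf'
  have hopt : η x (π x) * (1 / 2 * (gapReward π Δ x (π x) - f' x (π x)) ^ 2)
      = c / Δ ^ 2 * (1 / 2 * (Δ - f' x (π x)) ^ 2) := by
    simp [η, labelAlloc, gapReward]
  have hsub : w / Δ ^ 2 * (1 / 2 * f' x a ^ 2)
      ≤ η x a * (1 / 2 * (gapReward π Δ x a - f' x a) ^ 2) := by
    by_cases hlab : ℓ x a < m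
    · simp [η, labelAlloc, gapReward, ha, hlab]
    · have : f' x a = 0 := by rw [hf'g, hg _ (not_lt.1 hlab)]
      simp [this, gapReward, ha]
  have key := sq_le_of_inv_add_inv_le hc hw hcw hΔ.le hlt
  calc (1 : ℝ)
      ≤ (c * (Δ - f' x (π x)) ^ 2 / 2 + w * f' x a ^ 2 / 2) / Δ ^ 2 := by
        rw [le_div_iff₀ (by positivity)]; linarith
    _ = c / Δ ^ 2 * (1 / 2 * (Δ - f' x (π x)) ^ 2) + w / Δ ^ 2 * (1 / 2 * f' x a ^ 2) := by
        ring
    _ ≤ _ := by rw [← hopt]; gcongr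
    _ ≤ _ := add_le_sum_sum (fun y b => mul_nonneg (hη_nonneg y b) (by positivity)) x
        (Ne.symm ha)

theorem allocRegret_labelAlloc (hℓ : ∀ x a, ℓ x a = 0 ↔ a = π x) (c w : ℝ) :
    allocRegret (gapReward π Δ) π (labelAlloc π ℓ m c w)
      = #{p : X × A | ℓ p.1 p.2 ∈ Ico 1 m} * (w * Δ) := by
  classical
  have hterm : ∀ x a, labelAlloc π ℓ m c w x a * (gapReward π Δ x (π x) - gapReward π Δ x a)
      = if ℓ x a ∈ Ico 1 m then w * Δ else 0 := fun x a => by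
    by_cases ha : a = π x
    · simp [ha, (hℓ x (π x)).2 rfl]
    · have h0 : ℓ x a ≠ 0 := fun h => ha ((hℓ x a).1 h)
      rw [gapReward_sub_of_ne ha]
      simp [labelAlloc, ha, Nat.one_le_iff_ne_zero.2 h0]
  rw [allocRegret, ← Fintype.sum_prod_type']
  simp only [hterm, sum_ite, sum_const_zero, sum_const, nsmul_eq_mul, add_zero]

theorem card_label_mem_Ico_le
    (hinj : Set.InjOn (Function.uncurry ℓ) {p | Function.uncurry ℓ p ≠ 0}) :
    #{p : X × A | ℓ p.1 p.2 ∈ Ico 1 m} ≤ m - 1 := by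
  refine (card_le_card_of_injOn (Function.uncurry ℓ) (fun p hp => ?_) ?_).trans_eq
    (Nat.card_Ico 1 m)
  · simpa [Function.uncurry] using hp
  · exact hinj.mono fun p hp => Nat.one_le_iff_ne_zero.1 (mem_Ico.1 (mem_filter.1 hp).2).1

theorem complexity_gapReward_oneHot_le (hℓ : ∀ x a, ℓ x a = 0 ↔ a = π x)
    (hinj : Set.InjOn (Function.uncurry ℓ) {p | Function.uncurry ℓ p ≠ 0})
    (hm : 2 ≤ m) (hΔ : 0 < Δ) :
    Complexity (gapReward π Δ) π (linClass (oneHot ℓ m)) ≤ ENNReal.ofReal (2 * m / Δ) := by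
  have hm1 : (0 : ℝ) < m - 1 := by
    have : (2 : ℝ) ≤ m := by exact_mod_cast hm
    linarith
  set c : ℝ := 2 * m
  set w : ℝ := 2 * m / (m - 1)
  have hcw : c⁻¹ + w⁻¹ = 2⁻¹ := by
    simp only [c, w]; field_simp; ring
  refine (complexity_le_allocRegret (isFeasibleAlloc_labelAlloc (by positivity)
    (by positivity) hcw.le hΔ)).trans (ENNReal.ofReal_le_ofReal ?_)
  calc _ = #{p : X × A | ℓ p.1 p.2 ∈ Ico 1 m} * (w / Δ ^ 2 * Δ) := allocRegret_labelAlloc hℓ _ _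
    _ ≤ (m - 1 : ℕ) * (w / Δ ^ 2 * Δ) := by gcongr; exact card_label_mem_Ico_le hinj
    _ = 2 * m / Δ := by
        rw [Nat.cast_sub (by omega), Nat.cast_one]; simp only [w]; field_simp

theorem two_div_sq_le_sum_fiber (hℓ : ∀ x a, ℓ x a = 0 ↔ a = π x) (hΔ : 0 < Δ)
    {η : X → A → ℝ} (hη : IsFeasibleAlloc (gapReward π Δ) π (linClass (oneHot ℓ m)) η)
    {n : ℕ} (hn0 : n ≠ 0) (hnm : n < m) (hfib : ∃ x a, ℓ x a = n) :
    2 / Δ ^ 2 ≤ ∑ p : X × A with ℓ p.1 p.2 = n, η p.1 p.2 := by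
  classical
  obtain ⟨x, a, hxa⟩ := hfib
  set S := ∑ p : X × A with ℓ p.1 p.2 = n, η p.1 p.2
  have hπ : ∀ y, ℓ y (π y) ≠ n := fun y => by rw [(hℓ y (π y)).2 rfl]; exact Ne.symm hn0
  have hperturb : ∀ s : ℝ, 1 < s → 1 ≤ S * (1 / 2 * (s * Δ) ^ 2) := by
    intro s hs
    let f' : X → A → ℝ := fun y b => if ℓ y b = n then s * Δ else gapReward π Δ y b
    have hmem : f' ∈ linClass (oneHot ℓ m) := by
      refine mem_linClass_oneHot_iff.2
        ⟨fun k => if k = n then s * Δ else if k = 0 then Δ else 0, fun k hk => ?_, fun y b => ?_⟩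
      · simp only [show k ≠ n by omega, show k ≠ 0 by omega, if_false]
      · by_cases hb : b = π y
        · subst hb; simp [f', gapReward, (hℓ y (π y)).2 rfl]
        · have : ℓ y b ≠ 0 := fun h => hb ((hℓ y b).1 h)
          simp [f', gapReward, hb, this]
    have ha : a ≠ π x := fun h => hn0 (hxa ▸ (hℓ x a).2 h)
    have halt : f' x (π x) < f' x a := by
      simp only [f', hπ, hxa, if_true, if_false, gapReward]
      nlinarith
    have hinfo := hη.2 f' hmem ⟨x, a, ha, halt⟩
    rw [← Fintype.sum_prod_type', ← sum_filter_add_sum_filter_not univ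
      (fun p : X × A => ℓ p.1 p.2 = n)] at hinfo
    have hrest : ∑ p : X × A with ¬ℓ p.1 p.2 = n,
        η p.1 p.2 * (1 / 2 * (gapReward π Δ p.1 p.2 - f' p.1 p.2) ^ 2) = 0 :=
      sum_eq_zero fun p hp => by simp [f', (mem_filter.1 hp).2]
    have hfiber : ∑ p : X × A with ℓ p.1 p.2 = n,
        η p.1 p.2 * (1 / 2 * (gapReward π Δ p.1 p.2 - f' p.1 p.2) ^ 2)
          = S * (1 / 2 * (s * Δ) ^ 2) := by
      rw [sum_mul]
      refine sum_congr rfl fun p hp => ?_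
      have hlab := (mem_filter.1 hp).2
      have hb : p.2 ≠ π p.1 := fun h => hn0 (hlab ▸ (hℓ _ _).2 h)
      simp [f', gapReward, hlab, hb]
    linarith
  have hlim : Tendsto (fun s : ℝ => S * (1 / 2 * (s * Δ) ^ 2)) (𝓝[>] 1)
      (𝓝 (S * (1 / 2 * (1 * Δ) ^ 2))) :=
    ((by fun_prop : Continuous fun s : ℝ => S * (1 / 2 * (s * Δ) ^ 2)).tendsto 1).mono_left
      nhdsWithin_le_nhds
  have hS := ge_of_tendsto hlim (eventually_nhdsWithin_of_forall hperturb)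
  rw [div_le_iff₀ (by positivity)]
  linarith

theorem ofReal_le_complexity_gapReward_oneHot (hℓ : ∀ x a, ℓ x a = 0 ↔ a = π x)
    (hsurj : ∀ n, 1 ≤ n → n < m → ∃ x a, ℓ x a = n) (hm : 2 ≤ m) (hΔ : 0 < Δ) :
    ENNReal.ofReal (m / Δ) ≤ Complexity (gapReward π Δ) π (linClass (oneHot ℓ m)) := by
  classical
  refine ofReal_le_complexity fun η hη => ?_
  have hm2 : (2 : ℝ) ≤ m := by exact_mod_cast hm
  calc (m : ℝ) / Δ
      ≤ ∑ _n ∈ Ico 1 m, 2 / Δ ^ 2 * Δ := by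
        rw [sum_const, Nat.card_Ico, nsmul_eq_mul, Nat.cast_sub (by omega), Nat.cast_one,
          div_le_iff₀ hΔ]
        field_simp
        linarith
    _ ≤ ∑ n ∈ Ico 1 m, ∑ p : X × A with ℓ p.1 p.2 = n, η p.1 p.2 * Δ := by
        gcongr with n hn
        obtain ⟨hn1, hnm⟩ := mem_Ico.1 hn
        rw [← sum_mul]
        gcongr
        exact two_div_sq_le_sum_fiber hℓ hΔ hη (by omega) hnm (hsurj n hn1 hnm)
    _ = ∑ p : X × A with ℓ p.1 p.2 ∈ Ico 1 m, η p.1 p.2 * Δ :=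
        sum_fiberwise_eq_sum_filter _ _ _ _
    _ = ∑ p : X × A with ℓ p.1 p.2 ∈ Ico 1 m,
          η p.1 p.2 * (gapReward π Δ p.1 (π p.1) - gapReward π Δ p.1 p.2) := by
        refine sum_congr rfl fun p hp => ?_
        have h0 : ℓ p.1 p.2 ≠ 0 := Nat.one_le_iff_ne_zero.1 (mem_Ico.1 (mem_filter.1 hp).2).1
        rw [gapReward_sub_of_ne fun h => h0 ((hℓ _ _).2 h)]
    _ ≤ ∑ p : X × A, η p.1 p.2 * (gapReward π Δ p.1 (π p.1) - gapReward π Δ p.1 p.2) := by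
        refine sum_le_sum_of_subset_of_nonneg (filter_subset _ _) fun p _ _ => ?_
        refine mul_nonneg (hη.1 _ _) ?_
        by_cases hb : p.2 = π p.1
        · simp [hb]
        · rw [gapReward_sub_of_ne hb]; exact hΔ.le
    _ = allocRegret (gapReward π Δ) π η :=
        Fintype.sum_prod_type' fun x a => η x a * (gapReward π Δ x (π x) - gapReward π Δ x a)

end Bounds

section Labels

variable {X A : Type*} [Fintype X] [Fintype A]

theorem card_subtype_snd_ne [DecidableEq A] (π : X → A) :
    Fintype.card {p : X × A // p.2 ≠ π p.1} = Fintype.card X * (Fintype.card A - 1) := by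
  have hgraph : Fintype.card {p : X × A // p.2 = π p.1} = Fintype.card X :=
    Fintype.card_congr
      { toFun := fun p => p.1.1
        invFun := fun x => ⟨(x, π x), rfl⟩
        left_inv := fun ⟨⟨x, a⟩, h⟩ => Subtype.ext (Prod.ext rfl h.symm)
        right_inv := fun _ => rfl }
  rw [Fintype.card_subtype_compl, hgraph, Fintype.card_prod, Nat.mul_sub_one]

theorem exists_suboptimal_labeling (π : X → A) :
    ∃ ℓ : X → A → ℕ, (∀ x a, ℓ x a = 0 ↔ a = π x) ∧
      Set.InjOn (Function.uncurry ℓ) {p | Function.uncurry ℓ p ≠ 0} ∧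
      ∀ n, 1 ≤ n → n ≤ Fintype.card X * (Fintype.card A - 1) → ∃ x a, ℓ x a = n := by
  classical
  let e := (Fintype.equivFin {p : X × A // p.2 ≠ π p.1}).trans
    (finCongr (card_subtype_snd_ne π))
  refine ⟨fun x a => if h : a = π x then 0 else e ⟨(x, a), h⟩ + 1, fun x a => ?_, ?_, ?_⟩
  · by_cases h : a = π x <;> simp [h]
  · rintro ⟨x, a⟩ hxa ⟨y, b⟩ hyb hxy
    by_cases ha : a = π x
    · simp [Function.uncurry, ha] at hxa
    by_cases hb : b = π y
    · simp [Function.uncurry, hb] at hyb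
    simp only [Function.uncurry, ha, hb, dif_neg, not_false_eq_true, add_left_inj] at hxy
    simpa using congrArg Subtype.val (e.injective (Fin.ext hxy))
  · intro n hn1 hnM
    obtain ⟨⟨⟨x, a⟩, ha⟩, he⟩ : ∃ p, e p = ⟨n - 1, by omega⟩ := e.surjective _
    refine ⟨x, a, ?_⟩
    simp only [ha, dif_neg, not_false_eq_true, he]
    omega

end Labels

/-- There exist an instance with all gaps equal to `Δ_min` and a set of `N`
nested representations, all realizable, with smallest dimension `d_min` and
largest dimension `d_max`, such that learning with the smallest representation
costs at most `2 d_min / Δ_min` while learning with the largest costs at least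
`d_max / Δ_min`. -/
theorem exists_nested_dimension_gap {X A : Type*} [Fintype X] [Fintype A]
    [Nonempty A]
    (dmin dmax N : ℕ) (hdmin : 2 ≤ dmin) (hdd : dmin < dmax)
    (hdmax : dmax ≤ Fintype.card X * (Fintype.card A - 1))
    (hN2 : 2 ≤ N) (hN : N ≤ dmax - dmin + 1)
    (Δmin : ℝ) (hΔ : 0 < Δmin) :
    ∃ (f : X → A → ℝ) (π : X → A) (d : Fin N → ℕ)
      (φ : (i : Fin N) → X → A → Fin (d i) → ℝ),
      UniqueOpt f π ∧
      (∀ x a, a ≠ π x → f x (π x) - f x a = Δmin) ∧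
      StrictMono d ∧
      d ⟨0, by omega⟩ = dmin ∧ d ⟨N - 1, by omega⟩ = dmax ∧
      (∀ i j : Fin N, (i : ℕ) + 1 = (j : ℕ) →
        ∀ (x : X) (a : A) (k : ℕ) (hk : k < d i) (hk' : k < d j),
          φ j x a ⟨k, hk'⟩ = φ i x a ⟨k, hk⟩) ∧
      (∀ i, f ∈ linClass (φ i)) ∧
      Complexity f π (linClass (φ ⟨0, by omega⟩)) ≤
        ENNReal.ofReal (2 * dmin / Δmin) ∧
      ENNReal.ofReal (dmax / Δmin) ≤
        Complexity f π (linClass (φ ⟨N - 1, by omega⟩)) := by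
  obtain ⟨a₀⟩ := ‹Nonempty A›
  obtain ⟨ℓ, hℓ, hinj, hsurj⟩ := exists_suboptimal_labeling fun _ : X => a₀
  let d : Fin N → ℕ := fun i => if (i : ℕ) = N - 1 then dmax else dmin + i
  have hd_first : d ⟨0, by omega⟩ = dmin := if_neg (by simp only; omega)
  have hd_last : d ⟨N - 1, by omega⟩ = dmax := if_pos rfl
  refine ⟨gapReward (fun _ => a₀) Δmin, fun _ => a₀, d, fun i => oneHot ℓ (d i),
    uniqueOpt_gapReward hΔ, fun _ _ ha => gapReward_sub_of_ne ha, fun i j hij => ?_, hd_first,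
    hd_last, fun _ _ _ _ _ _ _ _ => rfl, fun i => gapReward_mem_linClass_oneHot hℓ ?_, ?_, ?_⟩
  · have : (i : ℕ) < j := hij
    simp only [d]
    split_ifs <;> omega
  · simp only [d]
    split_ifs <;> omega
  · beta_reduce
    rw [hd_first]
    exact complexity_gapReward_oneHot_le hℓ hinj hdmin hΔ
  · beta_reduce
    rw [hd_last]
    exact ofReal_le_complexity_gapReward_oneHot hℓ
      (fun n hn1 hn => hsurj n hn1 (by omega)) (by omega) hΔ
end
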